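/- arXiv:1208.3540 — 2 statements merged into one kernel-verified Lean document; each statement's English description precedes it below -/
import Mathlib

section
/- Let S be any finite subset of the positive integers and let w be a permutation (word) of S. Then the equivalence class ⟨w⟩ under ∼ contains a permutation v = v_1 v_2 ⋯ v_k (a concatenation of blocks) such that (a) each block v_i is an increasing or decreasing sequence of consecutive integers, and (b) every u ∼ w has the form u = v'_1 v'_2 ⋯ v'_k where each v'_i is a word on the same underlying set as v_i with v'_i ∼ v_i. Moreover, v is unique up to reversing blocks v_i of length two. -/
def AdjSwap1 (u v : List ℕ) : Prop :=
  ∃ (p q : List ℕ) (x y : ℕ), ((x : ℤ) - (y : ℤ)).natAbs = 1 ∧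
    u = p ++ x :: y :: q ∧ v = p ++ y :: x :: q

def ConsecRun (l : List ℕ) : Prop :=
  l ≠ [] ∧ (l.Chain' (fun a b => b = a + 1) ∨ l.Chain' (fun a b => a = b + 1))

def Decomposes (v : List (List ℕ)) (w : List ℕ) : Prop :=
  ∀ u : List ℕ, Relation.EqvGen AdjSwap1 w u →
    ∃ v' : List (List ℕ), u = v'.flatten ∧ v'.length = v.length ∧
      ∀ (idx : ℕ) (h1 : idx < v.length) (h2 : idx < v'.length),
        Relation.EqvGen AdjSwap1 (v.get ⟨idx, h1⟩) (v'.get ⟨idx, h2⟩)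

/-!
Letters that differ by at least two keep their relative order under `∼`. Hence a word equivalent
to a run of length at least three through `[a, a + n)` still shows the orientation of the run at
its ends, and two equivalent runs are equal unless they are the two orders of a pair.

Existence: start from singleton blocks and merge adjacent blocks whose concatenation is equivalent
to a run, as long as possible. Once no two adjacent blocks are mergeable, no swap can straddle a
block boundary, so every word of the class is a blockwise rearrangement of the blocks.

Uniqueness: a cut of one such decomposition lying strictly inside a run of another could be crossed
by a swap, which changes the set of letters before the cut. So two such decompositions have the
same cuts, and their blocks are pairwise equivalent runs.
-/

open List Relation

local infix:50 " ∼ " => EqvGen AdjSwap1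

theorem Relation.EqvGen.map_of_equivalence {α β : Type*} {r : α → α → Prop}
    {s : β → β → Prop} (hs : Equivalence s) (f : α → β) (hf : ∀ a b, r a b → s (f a) (f b))
    {a b : α} (h : EqvGen r a b) : s (f a) (f b) := by
  induction h with
  | rel _ _ h => exact hf _ _ h
  | refl => exact hs.refl _
  | symm _ _ _ ih => exact hs.symm ih
  | trans _ _ _ _ _ ih₁ ih₂ => exact hs.trans ih₁ ih₂

namespace AdjSwap1

variable {u v : List ℕ}

theorem symm (h : AdjSwap1 u v) : AdjSwap1 v u := by
  obtain ⟨p, q, x, y, hxy, rfl, rfl⟩ := h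
  exact ⟨p, q, y, x, by omega, rfl, rfl⟩

theorem perm (h : AdjSwap1 u v) : u ~ v := by
  obtain ⟨p, q, x, y, -, rfl, rfl⟩ := h
  exact (Perm.swap y x q).append_left p

theorem append_append (h : AdjSwap1 u v) (p q : List ℕ) : AdjSwap1 (p ++ u ++ q) (p ++ v ++ q) := by
  obtain ⟨p', q', x, y, hxy, rfl, rfl⟩ := h
  exact ⟨p ++ p', q' ++ q, x, y, hxy, by simp, by simp⟩

theorem reverse (h : AdjSwap1 u v) : AdjSwap1 u.reverse v.reverse := by
  obtain ⟨p, q, x, y, hxy, rfl, rfl⟩ := h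
  exact ⟨q.reverse, p.reverse, y, x, by omega, by simp, by simp⟩

theorem filter_eq {s : Finset ℕ} (hs : ∀ x ∈ s, ∀ y ∈ s, ((x : ℤ) - y).natAbs ≠ 1)
    (h : AdjSwap1 u v) : u.filter (· ∈ s) = v.filter (· ∈ s) := by
  obtain ⟨p, q, x, y, hxy, rfl, rfl⟩ := h
  have : ¬(x ∈ s ∧ y ∈ s) := fun ⟨hx, hy⟩ => hs x hx y hy hxy
  by_cases hx : x ∈ s <;> by_cases hy : y ∈ s <;> simp_all [filter_append]

end AdjSwap1

section Equivalence

variable {u v : List ℕ}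

theorem perm_of_eqv (h : u ∼ v) : u ~ v :=
  h.map_of_equivalence ⟨Perm.refl, Perm.symm, Perm.trans⟩ id fun _ _ => AdjSwap1.perm

theorem eqv_append_append (h : u ∼ v) (p q : List ℕ) : p ++ u ++ q ∼ p ++ v ++ q :=
  h.map_of_equivalence (EqvGen.is_equivalence _) (p ++ · ++ q) fun _ _ h =>
    EqvGen.rel _ _ (h.append_append p q)

theorem eqv_append {s t : List ℕ} (h₁ : u ∼ v) (h₂ : s ∼ t) : u ++ s ∼ v ++ t := by
  have h₁' := eqv_append_append h₁ [] s
  have h₂' := eqv_append_append h₂ v []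
  simp only [nil_append, append_nil] at h₁' h₂'
  exact EqvGen.trans _ _ _ h₁' h₂'

theorem eqv_reverse (h : u ∼ v) : u.reverse ∼ v.reverse :=
  h.map_of_equivalence (EqvGen.is_equivalence _) _ fun _ _ h => EqvGen.rel _ _ h.reverse

theorem filter_eq_of_eqv {s : Finset ℕ} (hs : ∀ x ∈ s, ∀ y ∈ s, ((x : ℤ) - y).natAbs ≠ 1)
    (h : u ∼ v) : u.filter (· ∈ s) = v.filter (· ∈ s) :=
  h.map_of_equivalence ⟨Eq.refl, Eq.symm, Eq.trans⟩ (filter (· ∈ s)) fun _ _ =>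
    AdjSwap1.filter_eq hs

theorem not_eqv_append_singleton {l : List ℕ} {x y : ℕ} (hxy : 2 ≤ ((x : ℤ) - y).natAbs)
    (hl : l.filter (· ∈ ({x, y} : Finset ℕ)) = [x, y]) (h : l ∼ u ++ [x]) : False := by
  have hs : ∀ a ∈ ({x, y} : Finset ℕ), ∀ b ∈ ({x, y} : Finset ℕ), ((a : ℤ) - b).natAbs ≠ 1 := by
    simp only [Finset.mem_insert, Finset.mem_singleton]
    omega
  have h' := filter_eq_of_eqv hs h
  rw [hl, filter_append] at h'
  have := congrArg getLast? h'
  simp at this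
  omega

end Equivalence

def IsRunOn (a n : ℕ) (l : List ℕ) : Prop :=
  l = range' a n ∨ l = (range' a n).reverse

namespace IsRunOn

variable {a n : ℕ} {l : List ℕ}

theorem length_eq (h : IsRunOn a n l) : l.length = n := by
  rcases h with rfl | rfl <;> simp

theorem mem_iff (h : IsRunOn a n l) {z : ℕ} : z ∈ l ↔ a ≤ z ∧ z < a + n := by
  rcases h with rfl | rfl <;> simp [mem_range'_1]

theorem reverse (h : IsRunOn a n l) : IsRunOn a n l.reverse := by
  rcases h with rfl | rfl <;> simp [IsRunOn]

theorem consecRun (h : IsRunOn a n l) (hn : 0 < n) : ConsecRun l := by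
  refine ⟨ne_nil_of_length_pos (h.length_eq ▸ hn), ?_⟩
  rcases h with rfl | rfl
  · exact Or.inl (isChain_range' a n 1)
  · exact Or.inr (isChain_reverse.mpr (isChain_range' a n 1))

end IsRunOn

theorem eq_range'_of_isChain {a : ℕ} :
    ∀ {l : List ℕ}, (a :: l).IsChain (fun x y => y = x + 1) → a :: l = range' a (l.length + 1)
  | [], _ => by simp
  | b :: l, h => by
    obtain ⟨rfl, h⟩ := isChain_cons_cons.mp h
    rw [eq_range'_of_isChain h]
    simp [range'_succ]

theorem ConsecRun.exists_isRunOn {l : List ℕ} (h : ConsecRun l) : ∃ a n, 0 < n ∧ IsRunOn a n l := by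
  obtain ⟨hne, hinc | hdec⟩ := h
  · obtain ⟨a, t, rfl⟩ := exists_cons_of_ne_nil hne
    exact ⟨a, t.length + 1, by omega, Or.inl (eq_range'_of_isChain hinc)⟩
  · obtain ⟨a, t, ht⟩ := exists_cons_of_ne_nil (reverse_ne_nil_iff.mpr hne)
    have hinc : (a :: t).IsChain (fun x y => y = x + 1) := ht ▸ isChain_reverse.mpr hdec
    refine ⟨a, t.length + 1, by omega, Or.inr ?_⟩
    rw [← eq_range'_of_isChain hinc, ← ht, reverse_reverse]

theorem ConsecRun.natAbs_sub_eq_one {l A B : List ℕ} {x y : ℕ} (h : ConsecRun l)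
    (hl : l = A ++ x :: y :: B) : ((x : ℤ) - y).natAbs = 1 := by
  rcases h.2 with h | h <;> rw [Chain', hl, isChain_append_cons_cons] at h <;> omega

theorem filter_range'_endpoints {a n z : ℕ} (hn : 2 ≤ n) (hz : z + 1 = a + n) :
    (range' a n).filter (· ∈ ({a, z} : Finset ℕ)) = [a, z] := by
  obtain ⟨m, rfl⟩ := Nat.exists_eq_add_of_le' hn
  obtain rfl : z = a + 1 + m := by omega
  have : (range' (a + 1) m).filter (· ∈ ({a, a + 1 + m} : Finset ℕ)) = [] :=
    filter_eq_nil_iff.mpr fun y hy => by simp [mem_range'_1] at hy ⊢; omega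
  rw [range'_succ, range'_1_concat, filter_cons, filter_append, this]
  simp

theorem reverse_range'_eqv_range' {a n : ℕ} (hn : n ≤ 2) : (range' a n).reverse ∼ range' a n := by
  interval_cases n
  · exact EqvGen.refl _
  · exact EqvGen.refl _
  · exact EqvGen.rel _ _ ⟨[], [], a + 1, a, by omega, by simp [range'_succ], by simp [range'_succ]⟩

theorem le_two_of_range'_eqv_reverse {a n : ℕ} (h : range' a n ∼ (range' a n).reverse) : n ≤ 2 := by
  by_contra! hn
  obtain ⟨m, rfl⟩ := Nat.exists_eq_add_of_le' hn
  refine not_eqv_append_singleton (x := a) (y := a + m + 2) (by omega)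
    (filter_range'_endpoints (n := m + 3) (by omega) (by omega))
    (u := (range' (a + 1) (m + 2)).reverse) ?_
  simpa [range'_succ (s := a) (n := m + 2)] using h

namespace IsRunOn

variable {a n z : ℕ} {l u : List ℕ}

theorem eqv_range'_of_eqv_concat (hl : IsRunOn a n l) (h : l ∼ u ++ [z]) (hz : z + 1 = a + n) :
    l ∼ range' a n := by
  rcases hl with rfl | rfl
  · exact EqvGen.refl _
  by_cases hn : n ≤ 2
  · exact reverse_range'_eqv_range' hn
  refine (not_eqv_append_singleton (y := a) (by omega) ?_ h).elim
  rw [filter_reverse, Finset.pair_comm, filter_range'_endpoints (by omega) hz]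
  rfl

theorem eqv_reverse_of_eqv_concat (hl : IsRunOn a n l) (h : l ∼ u ++ [a]) :
    l ∼ (range' a n).reverse := by
  rcases hl with rfl | rfl
  · by_cases hn : n ≤ 2
    · exact EqvGen.symm _ _ (reverse_range'_eqv_range' hn)
    exact (not_eqv_append_singleton (y := a + n - 1) (by omega)
      (filter_range'_endpoints (by omega) (by omega)) h).elim
  · exact EqvGen.refl _

theorem eqv_range'_of_eqv_cons (hl : IsRunOn a n l) (h : l ∼ a :: u) : l ∼ range' a n := by
  have := hl.reverse.eqv_reverse_of_eqv_concat (u := u.reverse) (by simpa using eqv_reverse h)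
  simpa using eqv_reverse this

theorem eqv_reverse_of_eqv_cons (hl : IsRunOn a n l) (h : l ∼ z :: u) (hz : z + 1 = a + n) :
    l ∼ (range' a n).reverse := by
  have := hl.reverse.eqv_range'_of_eqv_concat (u := u.reverse) (by simpa using eqv_reverse h) hz
  simpa using eqv_reverse this

end IsRunOn

theorem ConsecRun.eq_or_reverse_of_eqv {r s : List ℕ} (hr : ConsecRun r) (hs : ConsecRun s)
    (h : r ∼ s) : s = r ∨ (r.length = 2 ∧ s = r.reverse) := by
  obtain ⟨a, n, hn, hr⟩ := hr.exists_isRunOn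
  obtain ⟨b, k, hk, hs⟩ := hs.exists_isRunOn
  have hperm := perm_of_eqv h
  obtain rfl : n = k := by rw [← hr.length_eq, ← hs.length_eq, hperm.length_eq]
  obtain rfl : a = b := by
    have h₁ := hs.mem_iff.mp (hperm.subset (hr.mem_iff.mpr ⟨le_rfl, by omega⟩))
    have h₂ := hr.mem_iff.mp (hperm.symm.subset (hs.mem_iff.mpr ⟨le_rfl, by omega⟩))
    omega
  have h12 : n = 1 ∨ n = 2 → s = r ∨ (r.length = 2 ∧ s = r.reverse) := by
    rintro (rfl | rfl) <;> rcases hr with rfl | rfl <;> rcases hs with rfl | rfl <;>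
      simp [range'_succ]
  rcases hr with rfl | rfl <;> rcases hs with rfl | rfl
  · exact Or.inl rfl
  · exact h12 (by have := le_two_of_range'_eqv_reverse h; omega)
  · exact h12 (by have := le_two_of_range'_eqv_reverse (EqvGen.symm _ _ h); omega)
  · exact Or.inl rfl

def Mergeable (r s : List ℕ) : Prop :=
  ∃ t, ConsecRun t ∧ r ++ s ∼ t

/-- The letters at the boundary are the top of one interval and the bottom of the next, so each
block is equivalent to the run through its interval in the common direction. -/
theorem mergeable_of_eqv {r s r₁ s₁ : List ℕ} {x y : ℕ} (hr : ConsecRun r) (hs : ConsecRun s)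
    (hrs : r.Disjoint s) (hx : r ∼ r₁ ++ [x]) (hy : s ∼ y :: s₁)
    (hxy : ((x : ℤ) - y).natAbs = 1) : Mergeable r s := by
  obtain ⟨a, n, hn, hr⟩ := hr.exists_isRunOn
  obtain ⟨b, k, hk, hs⟩ := hs.exists_isRunOn
  have hxr := (hr.mem_iff (z := x)).mp ((perm_of_eqv hx).mem_iff.mpr (by simp))
  have hys := (hs.mem_iff (z := y)).mp ((perm_of_eqv hy).mem_iff.mpr (by simp))
  have hnot : ∀ z, a ≤ z → z < a + n → b ≤ z → z < b + k → False := fun z h₁ h₂ h₃ h₄ =>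
    hrs (hr.mem_iff.mpr ⟨h₁, h₂⟩) (hs.mem_iff.mpr ⟨h₃, h₄⟩)
  rcases (by omega : y = x + 1 ∨ x = y + 1) with rfl | rfl
  · have htop : x + 1 = a + n := by
      by_contra; exact hnot (x + 1) (by omega) (by omega) (by omega) (by omega)
    have hbot : b = x + 1 := by
      by_contra; exact hnot x (by omega) (by omega) (by omega) (by omega)
    rw [htop] at hy hbot
    subst hbot
    refine ⟨range' a (n + k), IsRunOn.consecRun (Or.inl rfl) (by omega), ?_⟩
    rw [← range'_append_1]
    exact eqv_append (hr.eqv_range'_of_eqv_concat hx htop) (hs.eqv_range'_of_eqv_cons hy)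
  · have htop : y + 1 = b + k := by
      by_contra; exact hnot (y + 1) (by omega) (by omega) (by omega) (by omega)
    have hbot : a = y + 1 := by
      by_contra; exact hnot y (by omega) (by omega) (by omega) (by omega)
    rw [htop] at hx hbot
    subst hbot
    refine ⟨(range' b (k + n)).reverse, IsRunOn.consecRun (Or.inr rfl) (by omega), ?_⟩
    rw [← range'_append_1, reverse_append]
    exact eqv_append (hr.eqv_reverse_of_eqv_concat hx) (hs.eqv_reverse_of_eqv_cons hy htop)

section Blocks

variable {α β : Type*}

theorem List.exists_of_flatten_eq_append_cons {L : List (List α)} {p q : List α} {x : α}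
    (h : L.flatten = p ++ x :: q) :
    ∃ L₁ b₁ b₂ L₂, L = L₁ ++ (b₁ ++ x :: b₂) :: L₂ ∧ p = L₁.flatten ++ b₁ ∧
      q = b₂ ++ L₂.flatten := by
  rcases flatten_eq_append_iff.mp h with ⟨L₁, L₂, rfl, rfl, h₂⟩ | ⟨L₁, b₁, c, b₂, L₂, rfl, rfl, h₂⟩
  · obtain ⟨E, b₂, L₂, rfl, hE, rfl⟩ := flatten_eq_cons_iff.mp h₂.symm
    refine ⟨L₁ ++ E, [], b₂, L₂, by simp, ?_, rfl⟩
    simp [flatten_eq_nil_iff.mpr hE]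
  · obtain ⟨rfl, rfl⟩ := cons_eq_cons.mp h₂
    exact ⟨L₁, b₁, b₂, L₂, rfl, rfl, rfl⟩

theorem List.exists_of_flatten_eq_append_cons_cons {L : List (List α)} (hL : ∀ b ∈ L, b ≠ [])
    {p q : List α} {x y : α} (h : L.flatten = p ++ x :: y :: q) :
    (∃ L₁ b₁ b₂ L₂, L = L₁ ++ (b₁ ++ x :: y :: b₂) :: L₂ ∧ p = L₁.flatten ++ b₁ ∧
      q = b₂ ++ L₂.flatten) ∨
    (∃ L₁ b₁ b₂ L₂, L = L₁ ++ (b₁ ++ [x]) :: (y :: b₂) :: L₂ ∧ p = L₁.flatten ++ b₁ ∧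
      q = b₂ ++ L₂.flatten) := by
  obtain ⟨L₁, b₁, _ | ⟨y', b₂⟩, L₂, rfl, rfl, hq⟩ := exists_of_flatten_eq_append_cons h
  · obtain ⟨E, b₂, L₂, rfl, hE, rfl⟩ := flatten_eq_cons_iff.mp hq.symm
    obtain rfl : E = [] := eq_nil_iff_forall_not_mem.mpr fun e he => hL e (by simp [he]) (hE e he)
    exact Or.inr ⟨L₁, b₁, b₂, L₂, by simp, rfl, rfl⟩
  · obtain ⟨rfl, rfl⟩ := cons_eq_cons.mp hq
    exact Or.inl ⟨L₁, b₁, b₂, L₂, by simp, rfl, rfl⟩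

theorem List.exists_of_forall₂_append_cons {R : α → β → Prop} {l : List α} {L₁ L₂ : List β}
    {c : β} (h : Forall₂ R l (L₁ ++ c :: L₂)) :
    ∃ m₁ a m₂, l = m₁ ++ a :: m₂ ∧ Forall₂ R m₁ L₁ ∧ R a c ∧ Forall₂ R m₂ L₂ := by
  obtain ⟨a, m₂, ha, hm₂, hdrop⟩ := forall₂_cons_right_iff.mp (forall₂_drop_append l L₁ _ h)
  exact ⟨_, a, m₂, by rw [← hdrop, take_append_drop], forall₂_take_append l L₁ _ h, ha, hm₂⟩

end Blocks

theorem map_length_eq_of_forall₂ {v v' : List (List ℕ)} (h : Forall₂ (· ∼ ·) v v') :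
    v.map length = v'.map length := by
  induction h with
  | nil => rfl
  | cons hb _ ih => simp [(perm_of_eqv hb).length_eq, ih]

theorem decomposes_iff {v : List (List ℕ)} {w : List ℕ} :
    Decomposes v w ↔ ∀ u, w ∼ u → ∃ v', u = v'.flatten ∧ Forall₂ (· ∼ ·) v v' :=
  forall_congr' fun _ => forall_congr' fun _ => exists_congr fun _ => and_congr_right fun _ => by
    rw [forall₂_iff_get, eq_comm]

section Decomposition

variable {v : List (List ℕ)} (hv : ∀ b ∈ v, ConsecRun b) (hnd : v.flatten.Nodup)
  (hc : v.IsChain (fun r s => ¬Mergeable r s))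
include hv hnd hc

/-- A swap straddling two blocks would make them mergeable, so every swap stays inside a block. -/
theorem exists_forall₂_of_adjSwap1 {v' : List (List ℕ)} {u : List ℕ}
    (hv' : Forall₂ (· ∼ ·) v v') (hs : AdjSwap1 v'.flatten u) :
    ∃ v'', u = v''.flatten ∧ Forall₂ (· ∼ ·) v v'' := by
  obtain ⟨p, q, x, y, hxy, hpq, rfl⟩ := hs
  have hne : ∀ c ∈ v', c ≠ [] := by
    intro c hc
    have : c.length ∈ v.map length := map_length_eq_of_forall₂ hv' ▸ mem_map_of_mem hc
    obtain ⟨b, hb, hbc⟩ := mem_map.mp this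
    exact ne_nil_of_length_pos (hbc ▸ length_pos_of_ne_nil (hv b hb).1)
  rcases exists_of_flatten_eq_append_cons_cons hne hpq with
    ⟨L₁, b₁, b₂, L₂, rfl, rfl, rfl⟩ | ⟨L₁, b₁, b₂, L₂, rfl, rfl, rfl⟩
  · obtain ⟨m₁, r, m₂, rfl, h₁, hr, h₂⟩ := exists_of_forall₂_append_cons hv'
    refine ⟨L₁ ++ (b₁ ++ y :: x :: b₂) :: L₂, by simp, rel_append h₁ (Forall₂.cons ?_ h₂)⟩
    exact EqvGen.trans _ _ _ hr (EqvGen.rel _ _ ⟨b₁, b₂, x, y, hxy, rfl, rfl⟩)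
  · exfalso
    obtain ⟨m₁, r, m₂', rfl, -, hr, h₂⟩ := exists_of_forall₂_append_cons hv'
    obtain ⟨s, m₂, hs, -, rfl⟩ := forall₂_cons_right_iff.mp h₂
    have hrs : r.Disjoint s := by
      refine disjoint_of_nodup_append (hnd.sublist ?_)
      exact (infix_append' m₁.flatten (r ++ s) (m₂.flatten)).sublist |>.trans (by simp)
    exact (isChain_append_cons_cons.mp hc).2.1
      (mergeable_of_eqv (hv r (by simp)) (hv s (by simp)) hrs hr hs hxy)

theorem decomposes_of_isChain {w : List ℕ} (hw : w ∼ v.flatten) : Decomposes v w := by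
  let P : List ℕ → Prop := fun u => ∃ v', u = v'.flatten ∧ Forall₂ (· ∼ ·) v v'
  have hstep : ∀ a b, AdjSwap1 a b → P a → P b := by
    rintro a b hab ⟨v', rfl, hv'⟩
    exact exists_forall₂_of_adjSwap1 hv hnd hc hv' hab
  have hP : ∀ a b, a ∼ b → (P a ↔ P b) := fun a b h =>
    h.map_of_equivalence ⟨Iff.refl, Iff.symm, Iff.trans⟩ P
      fun a b hab => ⟨hstep a b hab, hstep b a hab.symm⟩
  rw [decomposes_iff]
  intro u hu
  exact (hP _ _ (EqvGen.trans _ _ _ (EqvGen.symm _ _ hw) hu)).mp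
    ⟨v, rfl, forall₂_same.mpr fun _ _ => EqvGen.refl _⟩

end Decomposition

theorem exists_isChain_not_mergeable (v : List (List ℕ)) (hv : ∀ b ∈ v, ConsecRun b) :
    ∃ v' : List (List ℕ), v.flatten ∼ v'.flatten ∧ (∀ b ∈ v', ConsecRun b) ∧
      v'.IsChain (fun r s => ¬Mergeable r s) := by
  by_cases hc : v.IsChain (fun r s => ¬Mergeable r s)
  · exact ⟨v, EqvGen.refl _, hv, hc⟩
  rw [isChain_iff_forall_rel_of_append_cons_cons] at hc
  push Not at hc
  obtain ⟨r, s, m₁, m₂, rfl, t, ht, hrst⟩ := hc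
  have ht' : ∀ b ∈ m₁ ++ t :: m₂, ConsecRun b := by
    intro b hb
    simp only [mem_append, mem_cons] at hb
    rcases hb with hb | rfl | hb
    · exact hv b (by simp [hb])
    · exact ht
    · exact hv b (by simp [hb])
  obtain ⟨v', hv', hv'r, hc'⟩ := exists_isChain_not_mergeable _ ht'
  refine ⟨v', EqvGen.trans _ _ _ ?_ hv', hv'r, hc'⟩
  simpa using eqv_append (EqvGen.refl m₁.flatten) (eqv_append hrst (EqvGen.refl m₂.flatten))
termination_by v.length
decreasing_by simp_all

/-- Applied to the list of block lengths, these are the positions of the cuts between blocks. -/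
def IsPartialSum (L : List ℕ) (p : ℕ) : Prop :=
  ∃ i, (L.take i).sum = p

theorem isPartialSum_nil {p : ℕ} : IsPartialSum [] p ↔ p = 0 := by
  simp [IsPartialSum, eq_comm]

theorem isPartialSum_cons {a : ℕ} {L : List ℕ} {p : ℕ} :
    IsPartialSum (a :: L) p ↔ p = 0 ∨ (a ≤ p ∧ IsPartialSum L (p - a)) := by
  constructor
  · rintro ⟨_ | i, rfl⟩
    · simp
    · exact Or.inr ⟨by simp, i, by simp⟩
  · rintro (rfl | ⟨hap, i, hi⟩)
    · exact ⟨0, rfl⟩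
    · exact ⟨i + 1, by simp [hi]; omega⟩

theorem isPartialSum_cons_self {a : ℕ} {L : List ℕ} : IsPartialSum (a :: L) a :=
  ⟨1, by simp⟩

theorem eq_of_isPartialSum_iff :
    ∀ {A B : List ℕ}, (∀ a ∈ A, 0 < a) → (∀ b ∈ B, 0 < b) →
      (∀ p, IsPartialSum A p ↔ IsPartialSum B p) → A = B
  | [], [], _, _, _ => rfl
  | [], b :: B, _, hB, h => by
    exact ((hB b mem_cons_self).ne' (isPartialSum_nil.mp ((h b).mpr isPartialSum_cons_self))).elim
  | a :: A, [], hA, _, h => by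
    exact ((hA a mem_cons_self).ne' (isPartialSum_nil.mp ((h a).mp isPartialSum_cons_self))).elim
  | a :: A, b :: B, hA, hB, h => by
    have ha := hA a mem_cons_self
    have hb := hB b mem_cons_self
    have hab := isPartialSum_cons.mp ((h a).mp isPartialSum_cons_self)
    have hba := isPartialSum_cons.mp ((h b).mpr isPartialSum_cons_self)
    obtain rfl : a = b := by omega
    congr 1
    refine eq_of_isPartialSum_iff (fun x hx => hA x (by simp [hx]))
      (fun x hx => hB x (by simp [hx])) fun p => ?_
    have := h (a + p)
    simp only [isPartialSum_cons, Nat.add_sub_cancel_left] at this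
    simpa [ha.ne'] using this

theorem ConsecRun.exists_adjacent {b : List ℕ} (hb : ConsecRun b) {p : ℕ} (hp₀ : 0 < p)
    (hp : p < b.length) :
    ∃ (A : List ℕ) (x y : ℕ) (B : List ℕ),
      b = A ++ x :: y :: B ∧ A.length + 1 = p ∧ ((x : ℤ) - y).natAbs = 1 := by
  obtain ⟨i, rfl⟩ := Nat.exists_eq_add_of_le' hp₀
  have hb' : b = b.take i ++ b[i] :: b[i + 1] :: b.drop (i + 2) := by
    rw [← drop_eq_getElem_cons, ← drop_eq_getElem_cons, take_append_drop]
  exact ⟨_, _, _, _, hb', by simp; omega, hb.natAbs_sub_eq_one hb'⟩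

theorem exists_adjacent_of_not_isPartialSum {L : List (List ℕ)} (hL : ∀ b ∈ L, ConsecRun b)
    {p : ℕ} (hp : p < L.flatten.length) (hcut : ¬IsPartialSum (L.map length) p) :
    ∃ (A : List ℕ) (x y : ℕ) (B : List ℕ),
      L.flatten = A ++ x :: y :: B ∧ A.length + 1 = p ∧ ((x : ℤ) - y).natAbs = 1 := by
  induction L generalizing p with
  | nil => simp at hp
  | cons b L ih =>
    simp only [map_cons, isPartialSum_cons, not_or, not_and] at hcut
    by_cases hpb : p < b.length
    · obtain ⟨A, x, y, B, rfl, hA, hxy⟩ :=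
        (hL b mem_cons_self).exists_adjacent (Nat.pos_of_ne_zero hcut.1) hpb
      exact ⟨A, x, y, B ++ L.flatten, by simp, hA, hxy⟩
    · obtain ⟨A, x, y, B, hAB, hA, hxy⟩ :=
        ih (fun c hc => hL c (mem_cons_of_mem _ hc))
          (by simp only [flatten_cons, length_append] at hp; omega) (hcut.2 (by omega))
      exact ⟨b ++ A, x, y, B, by simp [hAB], by simp; omega, hxy⟩

theorem take_perm_of_forall₂ {v V : List (List ℕ)} (h : Forall₂ (· ∼ ·) v V) (i : ℕ) :
    V.flatten.take ((v.map length).take i).sum ~ (v.take i).flatten := by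
  rw [map_length_eq_of_forall₂ h, take_sum_flatten]
  exact (Perm.flatten_congr (forall₂_take i (h.imp fun _ _ => perm_of_eqv))).symm

/-- A cut of `v` inside a run of `v₂` could be crossed by a swap, changing the letters before it. -/
theorem isPartialSum_of_decomposes {w : List ℕ} {v v₂ : List (List ℕ)} (hvd : Decomposes v w)
    (hw : w ∼ v₂.flatten) (hv₂ : ∀ b ∈ v₂, ConsecRun b) {p : ℕ}
    (hp : IsPartialSum (v.map length) p) : IsPartialSum (v₂.map length) p := by
  obtain ⟨i, rfl⟩ := hp
  by_contra hcut
  obtain ⟨v', hv'eq, hv'⟩ := decomposes_iff.mp hvd _ hw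
  have hlt : ((v.map length).take i).sum < v₂.flatten.length := by
    have htotal : IsPartialSum (v₂.map length) v₂.flatten.length :=
      ⟨v₂.length, by rw [take_of_length_le (by simp), length_flatten]⟩
    have hle : ((v.map length).take i).sum ≤ v₂.flatten.length := by
      rw [hv'eq, length_flatten, ← map_length_eq_of_forall₂ hv']
      have := sum_take_add_sum_drop (v.map length) i
      omega
    exact lt_of_le_of_ne hle fun h => hcut (h ▸ htotal)
  obtain ⟨A, x, y, B, hAB, hA, hxy⟩ := exists_adjacent_of_not_isPartialSum hv₂ hlt hcut
  obtain ⟨v'', hv''eq, hv''⟩ :=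
    decomposes_iff.mp hvd _ (EqvGen.trans _ _ _ hw (EqvGen.rel _ _ ⟨A, B, x, y, hxy, hAB, rfl⟩))
  have h₁ := take_perm_of_forall₂ hv' i
  have h₂ := take_perm_of_forall₂ hv'' i
  rw [← hv'eq, hAB, ← hA] at h₁
  rw [← hv''eq, ← hA] at h₂
  have : A ++ [x] ~ A ++ [y] := by simpa [take_length_add_append] using h₁.trans h₂.symm
  have := perm_singleton.mp ((perm_append_left_iff A).mp this)
  simp only [cons.injEq, and_true] at this
  omega

theorem forall₂_eqv_of_decomposes {w : List ℕ} {v v₂ : List (List ℕ)}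
    (hv : w ∼ v.flatten) (hvr : ∀ b ∈ v, ConsecRun b) (hvd : Decomposes v w)
    (hv₂ : w ∼ v₂.flatten) (hv₂r : ∀ b ∈ v₂, ConsecRun b) (hv₂d : Decomposes v₂ w) :
    Forall₂ (· ∼ ·) v v₂ := by
  have hpos : ∀ V : List (List ℕ), (∀ b ∈ V, ConsecRun b) → ∀ n ∈ V.map length, 0 < n := by
    intro V hV n hn
    obtain ⟨b, hb, rfl⟩ := mem_map.mp hn
    exact length_pos_of_ne_nil (hV b hb).1
  have hlen : v.map length = v₂.map length :=
    eq_of_isPartialSum_iff (hpos v hvr) (hpos v₂ hv₂r) fun _ =>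
      ⟨isPartialSum_of_decomposes hvd hv₂ hv₂r, isPartialSum_of_decomposes hv₂d hv hvr⟩
  obtain ⟨v', hv'eq, hv'⟩ := decomposes_iff.mp hvd _ hv₂
  obtain rfl : v₂ = v' :=
    eq_iff_flatten_eq.mpr ⟨hv'eq, hlen.symm.trans (map_length_eq_of_forall₂ hv')⟩
  exact hv'

theorem exists_decomposes {w : List ℕ} (hw : w.Nodup) :
    ∃ v : List (List ℕ), w ∼ v.flatten ∧ (∀ b ∈ v, ConsecRun b) ∧ Decomposes v w := by
  obtain ⟨v, hwv, hvr, hc⟩ := exists_isChain_not_mergeable (w.map ([·])) (by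
    simp only [mem_map]
    rintro _ ⟨x, -, rfl⟩
    exact IsRunOn.consecRun (a := x) (n := 1) (Or.inl rfl) one_pos)
  rw [← flatMap_def, flatMap_singleton'] at hwv
  exact ⟨v, hwv, hvr, decomposes_of_isChain hvr ((perm_of_eqv hwv).nodup_iff.mp hw) hc hwv⟩

theorem stmt9_general (w : List ℕ) (hnd : w.Nodup) :
    ∃ v : List (List ℕ),
      Relation.EqvGen AdjSwap1 w v.flatten ∧
      (∀ b ∈ v, ConsecRun b) ∧
      Decomposes v w ∧
      ∀ v₂ : List (List ℕ),
        Relation.EqvGen AdjSwap1 w v₂.flatten →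
        (∀ b ∈ v₂, ConsecRun b) →
        Decomposes v₂ w →
        v₂.length = v.length ∧
          ∀ (idx : ℕ) (h1 : idx < v.length) (h2 : idx < v₂.length),
            v₂.get ⟨idx, h2⟩ = v.get ⟨idx, h1⟩ ∨
              ((v.get ⟨idx, h1⟩).length = 2 ∧
                v₂.get ⟨idx, h2⟩ = (v.get ⟨idx, h1⟩).reverse) := by
  obtain ⟨v, hwv, hvr, hvd⟩ := exists_decomposes hnd
  refine ⟨v, hwv, hvr, hvd, fun v₂ hwv₂ hv₂r hv₂d => ?_⟩
  obtain ⟨hlen, hget⟩ := forall₂_iff_get.mp (forall₂_eqv_of_decomposes hwv hvr hvd hwv₂ hv₂r hv₂d)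
  exact ⟨hlen.symm, fun i h₁ h₂ =>
    (hvr _ (get_mem _ _)).eq_or_reverse_of_eqv (hv₂r _ (get_mem _ _)) (hget i h₁ h₂)⟩

/-- Let `w` be a permutation (a word, without repetitions) of a finite set of positive
integers. Then the class `⟨w⟩` under `∼` contains a permutation `v = v₁ v₂ ⋯ vₖ`
such that (a) each block `vᵢ` is an increasing or decreasing run of consecutive
integers, and (b) every `u ∼ w` is a concatenation `v'₁ ⋯ v'ₖ` with `v'ᵢ ∼ vᵢ`.
Moreover `v` is unique up to reversing blocks of length two. -/
theorem stmt9 (w : List ℕ) (hpos : ∀ x ∈ w, 0 < x) (hnd : w.Nodup) :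
    ∃ v : List (List ℕ),
      Relation.EqvGen AdjSwap1 w v.flatten ∧
      (∀ b ∈ v, ConsecRun b) ∧
      Decomposes v w ∧
      ∀ v₂ : List (List ℕ),
        Relation.EqvGen AdjSwap1 w v₂.flatten →
        (∀ b ∈ v₂, ConsecRun b) →
        Decomposes v₂ w →
        v₂.length = v.length ∧
          ∀ (idx : ℕ) (h1 : idx < v.length) (h2 : idx < v₂.length),
            v₂.get ⟨idx, h2⟩ = v.get ⟨idx, h1⟩ ∨
              ((v.get ⟨idx, h1⟩).length = 2 ∧
                v₂.get ⟨idx, h2⟩ = (v.get ⟨idx, h1⟩).reverse) :=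
  stmt9_general w hnd
end

section
/- Let Q_n be the poset on {1,…,n} in which i < j exactly when i < j as integers and j − i ≥ 2. Then the set L(Q_n) of linear extensions of Q_n, regarded as permutations of {1,…,n} in one-line notation, is equal to the equivalence class ⟨12⋯n⟩ of the identity permutation under the relation ∼ on S_n. -/
/-!
Interchanging adjacent entries that differ by one preserves being a linear extension of `Qₙ`,
since consecutive values are incomparable in `Qₙ`. Conversely, insertion sort applied to a linear
extension only ever moves an entry `a` past an entry `b` with `b < a < b + 2`, i.e. `a = b + 1`;
so every step is a `∼`-move, and sorting ends at `12⋯n`.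
-/

namespace Relation.EqvGen

variable {α β : Type*} {r : α → α → Prop}

theorem map {s : β → β → Prop} (f : α → β) (hf : ∀ a b, r a b → s (f a) (f b))
    {a b : α} (h : EqvGen r a b) : EqvGen s (f a) (f b) := by
  induction h with
  | rel a b h => exact .rel _ _ (hf a b h)
  | refl => exact .refl _
  | symm _ _ _ ih => exact ih.symm
  | trans _ _ _ _ _ ih₁ ih₂ => exact ih₁.trans _ _ _ ih₂

theorem iff_of_rel_iff {P : α → Prop} (hP : ∀ a b, r a b → (P a ↔ P b))
    {a b : α} (h : EqvGen r a b) : P a ↔ P b := by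
  induction h with
  | rel a b h => exact hP a b h
  | refl => exact .rfl
  | symm _ _ _ ih => exact ih.symm
  | trans _ _ _ _ _ ih₁ ih₂ => exact ih₁.trans ih₂

end Relation.EqvGen

namespace List

variable {α : Type*}

theorem pairwise_append_cons_cons_swap {R : α → α → Prop} {x y : α}
    (hxy : R x y) (hyx : R y x) (p q : List α) :
    Pairwise R (p ++ x :: y :: q) ↔ Pairwise R (p ++ y :: x :: q) := by
  simp only [pairwise_append, pairwise_cons, mem_cons]
  grind

theorem forall_idxOf_lt_iff_pairwise [DecidableEq α] {r : α → α → Prop}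
    (hr : ∀ a, ¬ r a a) {w : List α} (hw : w.Nodup) :
    (∀ i j, i ∈ w → j ∈ w → r i j → w.idxOf i < w.idxOf j) ↔
      w.Pairwise (fun a b => ¬ r b a) := by
  constructor
  · intro h
    refine pairwise_iff_getElem.2 fun k l hk hl hkl hlk => ?_
    have := h w[l] w[k] (getElem_mem _) (getElem_mem _) hlk
    rw [hw.idxOf_getElem, hw.idxOf_getElem] at this
    omega
  · intro h i j hi hj hij
    have hi' := idxOf_lt_length_iff.2 hi
    have hj' := idxOf_lt_length_iff.2 hj
    rcases lt_trichotomy (w.idxOf i) (w.idxOf j) with hlt | heq | hgt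
    · exact hlt
    · exact absurd ((idxOf_inj hi).1 heq ▸ hij) (hr j)
    · have := pairwise_iff_getElem.1 h _ _ hj' hi' hgt
      rw [getElem_idxOf hi', getElem_idxOf hj'] at this
      exact absurd hij this

end List

section

open List Relation

theorem AdjSwap1.cons (a : ℕ) {u v : List ℕ} (h : AdjSwap1 u v) :
    AdjSwap1 (a :: u) (a :: v) := by
  obtain ⟨p, q, x, y, hxy, rfl, rfl⟩ := h
  exact ⟨a :: p, q, x, y, hxy, rfl, rfl⟩

theorem AdjSwap1.perm_s17 {u v : List ℕ} (h : AdjSwap1 u v) : u.Perm v := by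
  obtain ⟨p, q, x, y, -, rfl, rfl⟩ := h
  exact (Perm.swap y x q).append_left p

theorem AdjSwap1.pairwise_iff {u v : List ℕ} (h : AdjSwap1 u v) :
    u.Pairwise (fun a b => ¬ b + 2 ≤ a) ↔ v.Pairwise (fun a b => ¬ b + 2 ≤ a) := by
  obtain ⟨p, q, x, y, hxy, rfl, rfl⟩ := h
  exact pairwise_append_cons_cons_swap (by omega) (by omega) p q

theorem eqvGen_adjSwap1_cons (a : ℕ) {u v : List ℕ} (h : EqvGen AdjSwap1 u v) :
    EqvGen AdjSwap1 (a :: u) (a :: v) :=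
  h.map (List.cons a) fun _ _ => AdjSwap1.cons a

theorem eqvGen_adjSwap1_cons_orderedInsert (a : ℕ) :
    ∀ s : List ℕ, (∀ b ∈ s, ¬ b + 2 ≤ a) →
      EqvGen AdjSwap1 (a :: s) (s.orderedInsert (· ≤ ·) a)
  | [], _ => .refl _
  | b :: s, h => by
    by_cases hab : a ≤ b
    · rw [orderedInsert_cons, if_pos hab]
      exact .refl _
    · rw [orderedInsert_cons, if_neg hab]
      have hswap : AdjSwap1 (a :: b :: s) (b :: a :: s) :=
        ⟨[], s, a, b, by have := h b mem_cons_self; omega, rfl, rfl⟩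
      exact (EqvGen.rel _ _ hswap).trans _ _ _ <| eqvGen_adjSwap1_cons b <|
        eqvGen_adjSwap1_cons_orderedInsert a s fun c hc => h c (mem_cons_of_mem b hc)

theorem eqvGen_adjSwap1_insertionSort :
    ∀ w : List ℕ, w.Pairwise (fun a b => ¬ b + 2 ≤ a) →
      EqvGen AdjSwap1 w (w.insertionSort (· ≤ ·))
  | [], _ => .refl _
  | a :: t, h => by
    rw [pairwise_cons] at h
    exact (eqvGen_adjSwap1_cons a (eqvGen_adjSwap1_insertionSort t h.2)).trans _ _ _ <|
      eqvGen_adjSwap1_cons_orderedInsert a _ fun b hb => h.1 b ((mem_insertionSort _).1 hb)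

end

/-- The set `L(Qₙ)` of linear extensions of the poset `Qₙ` on `{1,…,n}` (where
`i <_{Qₙ} j` iff `i < j` in `ℤ` and `j - i ≥ 2`), viewed as permutations of
`{1,…,n}` in one-line notation (words in which `i` precedes `j` whenever
`i <_{Qₙ} j`), equals the equivalence class `⟨1 2 ⋯ n⟩` of the identity under the
relation `∼` generated by interchanging adjacent entries differing by one. -/
theorem stmt17 (n : ℕ) :
    {w : List ℕ | w.Perm (List.range' 1 n) ∧
        ∀ i j : ℕ, i ∈ w → j ∈ w → i + 2 ≤ j → w.idxOf i < w.idxOf j} =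
      {w : List ℕ | Relation.EqvGen AdjSwap1 (List.range' 1 n) w} := by
  have hlin_iff {w : List ℕ} (hw : w.Perm (List.range' 1 n)) :=
    List.forall_idxOf_lt_iff_pairwise (r := fun i j => i + 2 ≤ j) (by omega)
      (hw.nodup_iff.2 List.nodup_range')
  ext w
  simp only [Set.mem_ofPred_eq]
  constructor
  · rintro ⟨hperm, hlin⟩
    have hsort : w.insertionSort (· ≤ ·) = List.range' 1 n :=
      ((List.perm_insertionSort _ w).trans hperm).eq_of_pairwise' (List.pairwise_insertionSort _ w)
        ((List.pairwise_lt_range' (s := 1) (n := n)).imp le_of_lt)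
    exact (hsort ▸ eqvGen_adjSwap1_insertionSort w ((hlin_iff hperm).1 hlin)).symm
  · intro h
    have hperm : w.Perm (List.range' 1 n) :=
      (h.iff_of_rel_iff (P := (·.Perm (List.range' 1 n)))
        fun _ _ huv => ⟨huv.perm_s17.symm.trans, huv.perm_s17.trans⟩).1 (List.Perm.refl _)
    have hpair : w.Pairwise (fun a b => ¬ b + 2 ≤ a) :=
      (h.iff_of_rel_iff (P := (·.Pairwise fun a b => ¬ b + 2 ≤ a))
        fun _ _ => AdjSwap1.pairwise_iff).1
          ((List.pairwise_lt_range' (s := 1) (n := n)).imp fun _ => by omega)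
    exact ⟨hperm, (hlin_iff hperm).2 hpair⟩
end
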